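/- For integers k ≥ 1 and 1 ≤ r ≤ k, Σ_{l=1}^{r} (-1)^{k-l} l! S(k,l) + Σ_{m=1}^{k-r} (-1)^{k-m-r} binom(k,m) · r! · S(k-m, r) = 1, where S is the Stirling number of the second kind. -/

import Mathlib

/-!
Write `p x = x ^ k` on `ℤ` and `Δ` for the forward difference. The numbers `l! S(k, l)` are the
iterated differences `Δ^l p (0)`. By the binomial theorem for `p (x - 1)`, the second sum is, up to
the sign `(-1)^(k+r)` and its missing `m = 0` term `r! S(k, r)`, equal to `Δ^r p (-1)`. The
relation `Δ^l p (0) = Δ^l p (-1) + Δ^(l+1) p (-1)` telescopes to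
`(-1)^r Δ^r p (-1) = p (-1) - ∑_{l<r} (-1)^l Δ^l p (0)`, so the two sums cancel except for
`(-1)^k p (-1) = 1`.
-/

open Finset

/-- Stirling numbers of the second kind. -/
def S2 : ℕ → ℕ → ℕ
  | 0, 0 => 1
  | 0, _ + 1 => 0
  | _ + 1, 0 => 0
  | n + 1, k + 1 => S2 n k + (k + 1) * S2 n (k + 1)

/-- Unsigned Stirling numbers of the first kind. -/
def S1 : ℕ → ℕ → ℕ
  | 0, 0 => 1
  | 0, _ + 1 => 0
  | _ + 1, 0 => 0
  | n + 1, k + 1 => S1 n k + n * S1 n (k + 1)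

/-- Poly-Bernoulli number of negative index `B_n^{(-k)}` (closed power-sum formula). -/
def polyB (n k : ℕ) : ℤ :=
  ∑ l ∈ Finset.Icc 1 k, (-1 : ℤ) ^ (l + k) * (Nat.factorial l) * S2 k l * ((l : ℤ) + 1) ^ n

/-- Rising factorial `(r)_l = r (r+1) ⋯ (r+l-1)`. -/
def risingFact (r l : ℕ) : ℕ := ∏ i ∈ Finset.range l, (r + i)

open fwdDiff Function Nat

theorem S2_eq_stirlingSecond : S2 = stirlingSecond := by
  funext n k
  induction n generalizing k with
  | zero => cases k <;> rfl
  | succ n ih =>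
    cases k with
    | zero => rfl
    | succ k => rw [S2, stirlingSecond_succ_succ, ih, ih, add_comm]

theorem neg_one_pow_sub_eq_mul {R : Type*} [Ring R] {m n : ℕ} (h : n ≤ m) :
    (-1 : R) ^ (m - n) = (-1) ^ m * (-1) ^ n := by
  obtain ⟨d, rfl⟩ := Nat.exists_eq_add_of_le h
  rw [Nat.add_sub_cancel_left, ← pow_add, show n + d + n = d + 2 * n by omega, pow_add, pow_mul,
    neg_one_sq, one_pow, mul_one]

section fwdDiff

variable {R : Type*} [CommRing R]

theorem fwdDiff_iter_apply_add_one (f : ℤ → R) (n : ℕ) (y : ℤ) :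
    Δ_[1] ^[n] f (y + 1) = Δ_[1] ^[n] f y + Δ_[1] ^[n + 1] f y := by
  rw [iterate_succ_apply', fwdDiff]
  abel

theorem fwdDiff_iter_succ_mul_apply_zero (f : ℤ → R) (n : ℕ) :
    Δ_[1] ^[n + 1] (fun x : ℤ => (x : R) * f x) 0 = (n + 1) * Δ_[1] ^[n] f 1 := by
  rw [fwdDiff_iter_eq_sum_shift, fwdDiff_iter_eq_sum_shift, sum_range_succ', mul_sum]
  simp only [zsmul_eq_mul, zero_smul, zero_add, Int.cast_zero, zero_mul, mul_zero, add_zero,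
    Nat.add_sub_add_right, nsmul_eq_mul, mul_one]
  refine sum_congr rfl fun i _ => ?_
  have hchoose := congrArg (Nat.cast : ℕ → R) (Nat.add_one_mul_choose_eq n i)
  push_cast at hchoose ⊢
  rw [add_comm 1 (i : ℤ)]
  linear_combination -(-1) ^ (n - i) * f (i + 1) * hchoose

theorem neg_one_pow_mul_fwdDiff_iter_apply_neg_one (f : ℤ → R) (r : ℕ) :
    (-1) ^ r * Δ_[1] ^[r] f (-1) = f (-1) - ∑ l ∈ range r, (-1) ^ l * Δ_[1] ^[l] f 0 := by
  induction r with
  | zero => simp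
  | succ r ih =>
    have h := fwdDiff_iter_apply_add_one f r (-1)
    rw [neg_add_cancel] at h
    rw [sum_range_succ, ← sub_sub, ← ih, h, pow_succ]
    ring

end fwdDiff

theorem factorial_mul_stirlingSecond_eq_fwdDiff_iter (n k : ℕ) :
    (k ! * stirlingSecond n k : ℤ) = Δ_[1] ^[k] (fun x : ℤ => x ^ n) 0 := by
  induction n generalizing k with
  | zero =>
    cases k with
    | zero => simp
    | succ k =>
      simp only [iterate_succ_apply, pow_zero, fwdDiff_const]
      rw [iterate_fixed (fwdDiff_const 1 (0 : ℤ))]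
      simp
  | succ n ih =>
    cases k with
    | zero => simp
    | succ k =>
      have hpow : (fun x : ℤ => x ^ (n + 1)) = fun x => x * x ^ n := by
        funext x; ring
      have hmul := fwdDiff_iter_succ_mul_apply_zero (fun x : ℤ => x ^ n) k
      simp only [Int.cast_id] at hmul
      have hshift := fwdDiff_iter_apply_add_one (fun x : ℤ => x ^ n) k 0
      rw [zero_add] at hshift
      rw [hpow, hmul, hshift, ← ih, ← ih, stirlingSecond_succ_succ, factorial_succ]
      push_cast
      ring

theorem sum_neg_one_pow_choose_mul_fwdDiff_iter_pow (k r : ℕ) :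
    ∑ m ∈ range (k + 1),
        (-1 : ℤ) ^ m * k.choose m * Δ_[1] ^[r] (fun x : ℤ => x ^ (k - m)) 0
      = Δ_[1] ^[r] (fun x : ℤ => x ^ k) (-1) := by
  simp only [fwdDiff_iter_eq_sum_shift, mul_sum]
  rw [sum_comm]
  refine sum_congr rfl fun j _ => ?_
  rw [add_pow]
  simp only [zero_add, smul_eq_mul, mul_sum]
  refine sum_congr rfl fun m _ => ?_
  ring

theorem sum_Icc_neg_one_pow_factorial_mul_S2 {k r : ℕ} (hk : 1 ≤ k) (hrk : r ≤ k) :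
    ∑ l ∈ Icc 1 r, (-1 : ℤ) ^ (k - l) * l ! * S2 k l
      = (-1) ^ k * ∑ l ∈ range (r + 1), (-1) ^ l * Δ_[1] ^[l] (fun x : ℤ => x ^ k) 0 := by
  rw [range_succ_eq_Icc_zero, ← add_sum_Ioc_eq_sum_Icc (Nat.zero_le r),
    ← Icc_add_one_left_eq_Ioc, mul_add, mul_sum]
  simp only [iterate_zero, id_eq, zero_pow (Nat.one_le_iff_ne_zero.mp hk), mul_zero, zero_add]
  refine sum_congr rfl fun l hl => ?_
  rw [neg_one_pow_sub_eq_mul (by grind), S2_eq_stirlingSecond, mul_assoc,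
    factorial_mul_stirlingSecond_eq_fwdDiff_iter]
  ring

theorem sum_Icc_neg_one_pow_choose_mul_factorial_mul_S2 {k r : ℕ} (hrk : r ≤ k) :
    ∑ m ∈ Icc 1 (k - r), (-1 : ℤ) ^ (k - m - r) * k.choose m * r ! * S2 (k - m) r
      = (-1) ^ k * ((-1) ^ r * Δ_[1] ^[r] (fun x : ℤ => x ^ k) (-1)
          - (-1) ^ r * Δ_[1] ^[r] (fun x : ℤ => x ^ k) 0) := by
  have hvanish : ∀ m ∈ Icc 1 k, m ∉ Icc 1 (k - r) → stirlingSecond (k - m) r = 0 := by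
    intro m hm hm'
    simp only [mem_Icc] at hm hm'
    exact stirlingSecond_eq_zero_of_lt (by omega)
  rw [← sum_neg_one_pow_choose_mul_fwdDiff_iter_pow, range_succ_eq_Icc_zero,
    ← add_sum_Ioc_eq_sum_Icc (Nat.zero_le k), ← Icc_add_one_left_eq_Ioc, zero_add,
    ← sum_subset (Icc_subset_Icc_right (Nat.sub_le k r)) fun m hm hm' => by
      rw [← factorial_mul_stirlingSecond_eq_fwdDiff_iter, hvanish m hm hm']; simp]
  simp only [pow_zero, Nat.choose_zero_right, Nat.cast_one, one_mul, Nat.sub_zero]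
  rw [mul_add, add_sub_cancel_left, mul_sum, mul_sum]
  refine sum_congr rfl fun m hm => ?_
  simp only [mem_Icc] at hm
  rw [Nat.sub_sub, neg_one_pow_sub_eq_mul (by omega), S2_eq_stirlingSecond, mul_assoc _ (r ! : ℤ),
    factorial_mul_stirlingSecond_eq_fwdDiff_iter]
  ring

theorem stmt_16_general (k r : ℕ) (hk : 1 ≤ k) (hrk : r ≤ k) :
    (∑ l ∈ Finset.Icc 1 r, (-1 : ℤ) ^ (k - l) * (Nat.factorial l) * S2 k l) +
        (∑ m ∈ Finset.Icc 1 (k - r),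
          (-1 : ℤ) ^ (k - m - r) * (Nat.choose k m) * (Nat.factorial r) * S2 (k - m) r) = 1 := by
  rw [sum_Icc_neg_one_pow_factorial_mul_S2 hk hrk,
    sum_Icc_neg_one_pow_choose_mul_factorial_mul_S2 hrk,
    neg_one_pow_mul_fwdDiff_iter_apply_neg_one, sum_range_succ]
  ring_nf
  exact Even.neg_one_pow ⟨k, by ring⟩

theorem stmt_16 (k r : ℕ) (hk : 1 ≤ k) (hr1 : 1 ≤ r) (hrk : r ≤ k) :
    (∑ l ∈ Finset.Icc 1 r, (-1 : ℤ) ^ (k - l) * (Nat.factorial l) * S2 k l) +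
        (∑ m ∈ Finset.Icc 1 (k - r),
          (-1 : ℤ) ^ (k - m - r) * (Nat.choose k m) * (Nat.factorial r) * S2 (k - m) r) = 1 :=
  stmt_16_general k r hk hrk
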